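/- (Even-definiteness of the static Skyrme model.) Let 𝕃 be a real symmetric positive semidefinite 3×3 matrix, let T be its Skyrme stress tensor, and let W ∈ ℝ³ be a unit vector with 𝕃·W = 0. Then WᵀT W ≤ 0, with equality if and only if 𝕃 = 0. -/

import Mathlib

open Matrix

/-- The Skyrme stress tensor of a real 3×3 matrix `L`:
`T = L - ½(tr L)·I - ½(L·L - ¼ tr(L·L)·I - (tr L)·L + ¼ (tr L)²·I)`. -/
noncomputable def skyrmeStress (L : Matrix (Fin 3) (Fin 3) ℝ) : Matrix (Fin 3) (Fin 3) ℝ :=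
  L - (L.trace / 2) • (1 : Matrix (Fin 3) (Fin 3) ℝ)
    - (1 / 2 : ℝ) • (L * L - ((L * L).trace / 4) • (1 : Matrix (Fin 3) (Fin 3) ℝ)
        - L.trace • L + (L.trace ^ 2 / 4) • (1 : Matrix (Fin 3) (Fin 3) ℝ))

/-!
On a unit vector `W` in the kernel of `𝕃` only the scalar parts of the stress tensor survive,
giving `Wᵀ T W = -(tr 𝕃)/2 - ((tr 𝕃)² - tr(𝕃²))/8`. For positive semidefinite `𝕃` both `tr 𝕃`
and `(tr 𝕃)² - tr(𝕃²)` are nonnegative, the latter because every principal `2 × 2` minor is,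
so the form is `≤ 0`, and it vanishes only when `tr 𝕃 = 0`, i.e. `𝕃 = 0`.
-/

namespace Matrix.PosSemidef

variable {n : Type*} {A : Matrix n n ℝ}

theorem apply_mul_apply_le (hA : A.PosSemidef) (i j : n) : A i j * A j i ≤ A i i * A j j := by
  have hminor := (hA.submatrix ![i, j]).det_nonneg
  rw [det_fin_two] at hminor
  simp only [submatrix_apply, Matrix.cons_val_zero, Matrix.cons_val_one] at hminor
  linarith

theorem trace_mul_self_le_sq [Fintype n] (hA : A.PosSemidef) : (A * A).trace ≤ A.trace ^ 2 := by
  calc (A * A).trace = ∑ i, ∑ j, A i j * A j i := by simp [Matrix.trace, Matrix.mul_apply]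
    _ ≤ ∑ i, ∑ j, A i i * A j j :=
      Finset.sum_le_sum fun i _ => Finset.sum_le_sum fun j _ => hA.apply_mul_apply_le i j
    _ = A.trace ^ 2 := by simp [Matrix.trace, sq, Finset.sum_mul_sum]

end Matrix.PosSemidef

theorem dotProduct_skyrmeStress_mulVec_of_mulVec_eq_zero {L : Matrix (Fin 3) (Fin 3) ℝ}
    {W : Fin 3 → ℝ} (hW : W ⬝ᵥ W = 1) (hker : L *ᵥ W = 0) :
    W ⬝ᵥ skyrmeStress L *ᵥ W = -(L.trace / 2) - (L.trace ^ 2 - (L * L).trace) / 8 := by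
  have hker_sq : (L * L) *ᵥ W = 0 := by rw [← mulVec_mulVec, hker, mulVec_zero]
  simp only [skyrmeStress, sub_mulVec, add_mulVec, smul_mulVec, one_mulVec, hker, hker_sq,
    dotProduct_sub, dotProduct_add, dotProduct_smul, dotProduct_zero, hW, smul_eq_mul]
  ring

theorem stmt4 (𝕃 : Matrix (Fin 3) (Fin 3) ℝ) (hpsd : 𝕃.PosSemidef)
    (W : Fin 3 → ℝ) (hW : W ⬝ᵥ W = 1) (hker : 𝕃.mulVec W = 0) :
    W ⬝ᵥ (skyrmeStress 𝕃).mulVec W ≤ 0 ∧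
      (W ⬝ᵥ (skyrmeStress 𝕃).mulVec W = 0 ↔ 𝕃 = 0) := by
  rw [dotProduct_skyrmeStress_mulVec_of_mulVec_eq_zero hW hker]
  have htr := hpsd.trace_nonneg
  have hsq := hpsd.trace_mul_self_le_sq
  refine ⟨by linarith, fun h => hpsd.trace_eq_zero_iff.mp (by linarith), ?_⟩
  rintro rfl
  simp
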